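/- arXiv:1509.05760 — 3 statements merged into one kernel-verified Lean document; each statement's English description precedes it below -/
import Mathlib

section
/- In the AO-FTRL algorithm with proximal non-negative regularizers r_t (satisfying argmin_{x∈K} r_t(x) = x_t), gradient predictions g̃_t with g̃₁ = 0, and updates x_{t+1} = argmin_{x∈K} (g_{1:t} + g̃_{t+1})·x + r_{0:t}(x), define y_t = argmin_{x∈K} (g_{1:t}·x + r_{0:t}(x)). Then for every T and all x ∈ K: sum_{t=1}^T [g̃_t·(x_t − y_t) + g_t·y_t] ≤ sum_{t=1}^T g_t·x + r_{0:T}(x). -/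
/-- Key induction lemma of the AO-FTRL-Prox analysis: with proximal nonnegative
regularizers `r t` (minimized over `K` at `x t`), predictions `g̃` with `g̃ 1 = 0`,
AO-FTRL updates `x (t+1) = argmin_{z∈K} (g_{1:t} + g̃_{t+1})·z + r_{0:t} z`, and
`y t = argmin_{z∈K} g_{1:t}·z + r_{0:t} z`, we have for all `T` and `x' ∈ K`:
`∑_{t=1}^T [g̃_t·(x_t - y_t) + g_t·y_t] ≤ ∑_{t=1}^T g_t·x' + r_{0:T}(x')`. -/
theorem stmt_3 (n : ℕ) (K : Set (Fin n → ℝ)) (hKne : K.Nonempty)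
    (hKc : IsCompact K) (hKv : Convex ℝ K)
    (g gt : ℕ → Fin n → ℝ) (r : ℕ → (Fin n → ℝ) → ℝ) (x y : ℕ → Fin n → ℝ)
    (hr : ∀ t, ∀ z ∈ K, 0 ≤ r t z)
    (hgt1 : gt 1 = 0)
    (hx1 : x 1 ∈ K ∧ IsMinOn (r 0) K (x 1))
    (hprox : ∀ t, 1 ≤ t → IsMinOn (r t) K (x t))
    (hupd : ∀ t, 1 ≤ t → x (t + 1) ∈ K ∧
      IsMinOn (fun z => (∑ i, ((∑ s ∈ Finset.Icc 1 t, g s i) + gt (t + 1) i) * z i)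
        + ∑ s ∈ Finset.Icc 0 t, r s z) K (x (t + 1)))
    (hy : ∀ t, 1 ≤ t → y t ∈ K ∧
      IsMinOn (fun z => (∑ i, (∑ s ∈ Finset.Icc 1 t, g s i) * z i)
        + ∑ s ∈ Finset.Icc 0 t, r s z) K (y t)) :
    ∀ T : ℕ, ∀ x' ∈ K,
      ∑ t ∈ Finset.Icc 1 T,
          ((∑ i, gt t i * (x t i - y t i)) + ∑ i, g t i * y t i)
        ≤ (∑ t ∈ Finset.Icc 1 T, ∑ i, g t i * x' i)
          + ∑ s ∈ Finset.Icc 0 T, r s x' := by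
  intro T
  induction T with
  | zero =>
    intro x' hx'
    have he : Finset.Icc 1 0 = (∅ : Finset ℕ) := Finset.Icc_eq_empty (by omega)
    simp [he]
    exact hr 0 x' hx'
  | succ T ih =>
    intro x' hx'
    have hsum : ∀ (f : ℕ → ℝ), ∑ t ∈ Finset.Icc 1 (T+1), f t
        = (∑ t ∈ Finset.Icc 1 T, f t) + f (T+1) := fun f =>
      Finset.sum_Icc_succ_top (by omega) f
    have hsum0 : ∀ (f : ℕ → ℝ), ∑ t ∈ Finset.Icc 0 (T+1), f t
        = (∑ t ∈ Finset.Icc 0 T, f t) + f (T+1) := fun f =>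
      Finset.sum_Icc_succ_top (by omega) f
    -- swap-sums helper
    have hswap : ∀ (z : Fin n → ℝ) (m : ℕ), ∑ t ∈ Finset.Icc 1 m, ∑ i, g t i * z i
        = ∑ i, (∑ s ∈ Finset.Icc 1 m, g s i) * z i := by
      intro z m
      rw [Finset.sum_comm]
      exact Finset.sum_congr rfl fun i _ => (Finset.sum_mul ..).symm
    rcases Nat.eq_zero_or_pos T with hT | hT
    · subst hT
      have hy1 := (hy 1 le_rfl)
      have hmin := isMinOn_iff.mp hy1.2 x' hx'
      simp only [Finset.Icc_self, Finset.sum_singleton] at hmin ⊢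
      have h01 : Finset.Icc 0 1 = {0, 1} := by decide
      rw [h01] at hmin ⊢
      simp only [Finset.sum_insert (by decide : (0:ℕ) ∉ ({1} : Finset ℕ)), Finset.sum_singleton] at hmin ⊢
      have h0 : 0 ≤ r 0 (y 1) := hr 0 _ hy1.1
      have h1 : 0 ≤ r 1 (y 1) := hr 1 _ hy1.1
      simp [hgt1]
      linarith
    · have hx2 := hupd T hT
      have hy2 := hy (T+1) (by omega)
      have ihx := ih (x (T+1)) hx2.1
      have hminx := isMinOn_iff.mp hx2.2 (y (T+1)) hy2.1
      have hminy := isMinOn_iff.mp hy2.2 x' hx'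
      have hry : 0 ≤ r (T+1) (y (T+1)) := hr _ _ hy2.1
      rw [hsum, hsum, hsum0]
      rw [hswap] at ihx ⊢
      rw [hsum0] at hminy
      -- expand (Icc 1 (T+1)) inner gradient sum inside hminy
      have hsplit : ∀ z : Fin n → ℝ,
          ∑ i, (∑ s ∈ Finset.Icc 1 (T+1), g s i) * z i
          = (∑ i, (∑ s ∈ Finset.Icc 1 T, g s i) * z i) + ∑ i, g (T+1) i * z i := by
        intro z
        rw [← Finset.sum_add_distrib]
        refine Finset.sum_congr rfl fun i _ => ?_
        rw [Finset.sum_Icc_succ_top (by omega), add_mul]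
      rw [hsplit] at hminy
      rw [hsplit x'] at hminy
      rw [hsum0 (fun s => r s x')] at hminy
      have hexp : ∀ z : Fin n → ℝ,
          ∑ i, ((∑ s ∈ Finset.Icc 1 T, g s i) + gt (T+1) i) * z i
          = (∑ i, (∑ s ∈ Finset.Icc 1 T, g s i) * z i) + ∑ i, gt (T+1) i * z i := by
        intro z
        rw [← Finset.sum_add_distrib]
        exact Finset.sum_congr rfl fun i _ => add_mul ..
      rw [hexp, hexp] at hminx
      have hdiff : ∑ i, gt (T+1) i * (x (T+1) i - y (T+1) i)
          = (∑ i, gt (T+1) i * x (T+1) i) - ∑ i, gt (T+1) i * y (T+1) i := by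
        rw [← Finset.sum_sub_distrib]
        exact Finset.sum_congr rfl fun i _ => mul_sub ..
      rw [hdiff]
      linarith
end

section
/- For any vectors h₁,…,h_T ∈ R^n, the infimum over s ∈ R^n with s ⪰ 0 and ⟨s, 1⟩ ≤ n of sum_{t=1}^T sum_{i=1}^n h_{t,i}²/s_i equals (1/n)·(sum_{i=1}^n ‖h_{1:T,i}‖₂)², where ‖h_{1:T,i}‖₂ = sqrt(sum_{t=1}^T h_{t,i}²). Consequently, sum_{i=1}^n sqrt(sum_{t=1}^T h_{t,i}²) = sqrt( n · inf_{s⪰0, ⟨s,1⟩≤n} sum_{t=1}^T ‖h_t‖²_{diag(s)^{-1}} ). -/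
set_option maxHeartbeats 1000000


/-- Optimality of the a posteriori diagonal regularization: for vectors
`h 1, …, h T ∈ ℝⁿ`, the infimum over `s ≻ 0` with `∑ s_i ≤ n` of
`∑_t ∑_i h_{t,i}²/s_i` is `(1/n)(∑_i ‖h_{1:T,i}‖₂)²`, and consequently
`∑_i √(∑_t h_{t,i}²) = √(n · inf_s ∑_t ‖h_t‖²_{diag(s)⁻¹})`. -/
theorem stmt_8 (n T : ℕ) (hn : 0 < n) (h : Fin T → Fin n → ℝ) :
    IsGLB {v : ℝ | ∃ s : Fin n → ℝ, (∀ i, 0 < s i) ∧ (∑ i, s i) ≤ n ∧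
        v = ∑ t, ∑ i, (h t i) ^ 2 / s i}
      ((1 / n) * (∑ i, Real.sqrt (∑ t, (h t i) ^ 2)) ^ 2)
    ∧ ∑ i, Real.sqrt (∑ t, (h t i) ^ 2)
      = Real.sqrt (n * sInf {v : ℝ | ∃ s : Fin n → ℝ, (∀ i, 0 < s i) ∧
          (∑ i, s i) ≤ n ∧ v = ∑ t, ∑ i, (h t i) ^ 2 / s i}) := by
  have hn' : (0:ℝ) < n := by exact_mod_cast hn
  set a : Fin n → ℝ := fun i => Real.sqrt (∑ t, (h t i) ^ 2) with ha
  have ha0 : ∀ i, 0 ≤ a i := fun i => Real.sqrt_nonneg _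
  have hasq : ∀ i, a i ^ 2 = ∑ t, (h t i) ^ 2 := fun i =>
    Real.sq_sqrt (Finset.sum_nonneg fun t _ => sq_nonneg _)
  set A := ∑ i, a i with hA
  have hA0 : 0 ≤ A := Finset.sum_nonneg fun i _ => ha0 i
  have hval : ∀ s : Fin n → ℝ,
      (∑ t, ∑ i, (h t i) ^ 2 / s i) = ∑ i, a i ^ 2 / s i := by
    intro s
    rw [Finset.sum_comm]
    exact Finset.sum_congr rfl fun i _ => by rw [hasq, Finset.sum_div]
  -- lower bound
  have hlb : ∀ v ∈ {v : ℝ | ∃ s : Fin n → ℝ, (∀ i, 0 < s i) ∧ (∑ i, s i) ≤ n ∧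
      v = ∑ t, ∑ i, (h t i) ^ 2 / s i}, (1 / (n:ℝ)) * A ^ 2 ≤ v := by
    rintro v ⟨s, hs, hsum, rfl⟩
    rw [hval]
    have hV0 : 0 ≤ ∑ i, a i ^ 2 / s i :=
      Finset.sum_nonneg fun i _ => div_nonneg (sq_nonneg _) (hs i).le
    have hcs := Finset.sq_sum_div_le_sum_sq_div Finset.univ a (fun i _ => hs i)
    have hsum0 : 0 < ∑ i, s i := Finset.sum_pos (fun i _ => hs i) ⟨⟨0, hn⟩, Finset.mem_univ _⟩
    calc (1 / (n:ℝ)) * A ^ 2 = A ^ 2 / n := by ring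
      _ ≤ A ^ 2 / (∑ i, s i) := by
          apply div_le_div_of_nonneg_left (sq_nonneg _) hsum0 hsum
      _ ≤ ∑ i, a i ^ 2 / s i := hcs
  -- the GLB statement
  have hglb : IsGLB {v : ℝ | ∃ s : Fin n → ℝ, (∀ i, 0 < s i) ∧ (∑ i, s i) ≤ n ∧
      v = ∑ t, ∑ i, (h t i) ^ 2 / s i} ((1 / n) * A ^ 2) := by
    constructor
    · exact hlb
    · intro b hb
      refine le_of_forall_pos_le_add fun ε hε => ?_
      set δ : ℝ := ε / (A + 1) with hδ
      have hδ0 : 0 < δ := div_pos hε (by linarith)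
      have hD : 0 < A + n * δ := by positivity
      set s : Fin n → ℝ := fun i => n * (a i + δ) / (A + n * δ) with hs
      have hspos : ∀ i, 0 < s i := by
        intro i
        rw [hs]
        exact div_pos (mul_pos hn' (by have := ha0 i; linarith)) hD
      have hssum : (∑ i, s i) = n := by
        simp only [hs]
        rw [← Finset.sum_div]
        rw [← Finset.mul_sum, Finset.sum_add_distrib, ← hA, Finset.sum_const,
          Finset.card_univ, Fintype.card_fin, nsmul_eq_mul]
        field_simp
      have hmem : (∑ t, ∑ i, (h t i) ^ 2 / s i) ∈ {v : ℝ | ∃ s : Fin n → ℝ,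
          (∀ i, 0 < s i) ∧ (∑ i, s i) ≤ n ∧ v = ∑ t, ∑ i, (h t i) ^ 2 / s i} :=
        ⟨s, hspos, le_of_eq hssum, rfl⟩
      have hb' := hb hmem
      have hbound : (∑ t, ∑ i, (h t i) ^ 2 / s i) ≤ A * (A + n * δ) / n := by
        rw [hval]
        have hterm : ∀ i, a i ^ 2 / s i ≤ a i * (A + n * δ) / n := by
          intro i
          have hai : 0 < a i + δ := by have := ha0 i; linarith
          rw [hs, div_div_eq_mul_div, div_le_div_iff₀ (by positivity) hn']
          have h1 : a i ^ 2 ≤ a i * (a i + δ) := by nlinarith [ha0 i]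
          calc a i ^ 2 * (A + n * δ) * n ≤ a i * (a i + δ) * (A + n * δ) * n :=
                mul_le_mul_of_nonneg_right (mul_le_mul_of_nonneg_right h1 hD.le) hn'.le
            _ = a i * (A + n * δ) * (n * (a i + δ)) := by ring
        calc (∑ i, a i ^ 2 / s i) ≤ ∑ i, a i * (A + n * δ) / n :=
              Finset.sum_le_sum fun i _ => hterm i
          _ = A * (A + n * δ) / n := by
              rw [← Finset.sum_div, ← Finset.sum_mul, ← hA]
      have harith : A * (A + n * δ) / n ≤ (1 / n) * A ^ 2 + ε := by
        have h1 : A * (A + n * δ) / n = (1 / n) * A ^ 2 + A * δ := by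
          field_simp
        rw [h1]
        have h2 : A * δ ≤ ε := by
          rw [hδ]
          rw [mul_div_assoc'] at *
          rw [div_le_iff₀ (by linarith : (0:ℝ) < A + 1)]
          nlinarith
        linarith
      linarith
  refine ⟨hglb, ?_⟩
  have hne : {v : ℝ | ∃ s : Fin n → ℝ, (∀ i, 0 < s i) ∧ (∑ i, s i) ≤ n ∧
      v = ∑ t, ∑ i, (h t i) ^ 2 / s i}.Nonempty := by
    refine ⟨∑ t, ∑ i, (h t i) ^ 2 / 1, fun _ => 1, fun _ => one_pos, ?_, rfl⟩
    simp
  rw [hglb.csInf_eq hne]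
  rw [show (n:ℝ) * ((1 / n) * A ^ 2) = A ^ 2 by field_simp]
  rw [Real.sqrt_sq hA0]
end

section
/- (AO-GD regret bound) Let K ⊆ ×_{i=1}^n [−R_i, R_i]. With gradient prediction g̃_{t+1} = g_t (and g₀ := 0), define Δ_{s,i} = sqrt(sum_{a=1}^s (g_{a,i} − g_{a−1,i})²) and regularizer r_{0:t}(x) = sum_{i=1}^n sum_{s=1}^t ((Δ_{s,i} − Δ_{s−1,i})/(2R_i))·(x_i − x_{s,i})². Then the AO-FTRL iterates satisfy, for all x ∈ K: sum_{t=1}^T (f_t(x_t) − f_t(x)) ≤ 4 · sum_{i=1}^n R_i · sqrt(sum_{t=1}^T (g_{t,i} − g_{t−1,i})²). -/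
/-- Cumulative prediction error `Δ_{s,i} = √(∑_{a=1}^s (g_{a,i} - g_{a-1,i})²)`. -/
noncomputable def aogdDelta (n : ℕ) (g : ℕ → Fin n → ℝ) (s : ℕ) (i : Fin n) : ℝ :=
  Real.sqrt (∑ a ∈ Finset.Icc 1 s, (g a i - g (a - 1) i) ^ 2)

/-- The AO-GD adaptive regularizer
`r_{0:t}(z) = ∑_i ∑_{s=1}^t ((Δ_{s,i} - Δ_{s-1,i})/(2 R_i)) (z_i - x_{s,i})²`. -/
noncomputable def aogdReg (n : ℕ) (R : Fin n → ℝ) (g : ℕ → Fin n → ℝ)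
    (x : ℕ → Fin n → ℝ) (t : ℕ) (z : Fin n → ℝ) : ℝ :=
  ∑ i, ∑ s ∈ Finset.Icc 1 t,
    ((aogdDelta n g s i - aogdDelta n g (s - 1) i) / (2 * R i)) * (z i - x s i) ^ 2

lemma aux_delta_nonneg (n : ℕ) (g : ℕ → Fin n → ℝ) (s : ℕ) (i : Fin n) :
    0 ≤ aogdDelta n g s i := Real.sqrt_nonneg _

lemma aux_delta_zero (n : ℕ) (g : ℕ → Fin n → ℝ) (i : Fin n) : aogdDelta n g 0 i = 0 := by
  simp [aogdDelta]

lemma aux_delta_mono (n : ℕ) (g : ℕ → Fin n → ℝ) {s t : ℕ} (h : s ≤ t) (i : Fin n) :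
    aogdDelta n g s i ≤ aogdDelta n g t i :=
  Real.sqrt_le_sqrt (Finset.sum_le_sum_of_subset_of_nonneg
    (Finset.Icc_subset_Icc_right h) fun _ _ _ => sq_nonneg _)

lemma aux_delta_sq (n : ℕ) (g : ℕ → Fin n → ℝ) (m : ℕ) (i : Fin n) :
    aogdDelta n g (m+1) i ^ 2 = aogdDelta n g m i ^ 2 + (g (m+1) i - g m i) ^ 2 := by
  unfold aogdDelta
  rw [Real.sq_sqrt (by positivity), Real.sq_sqrt (by positivity),
    Finset.sum_Icc_succ_top (by omega)]
  simp

lemma aux_teles (n : ℕ) (g : ℕ → Fin n → ℝ) (t : ℕ) (i : Fin n) :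
    ∑ s ∈ Finset.Icc 1 t, (aogdDelta n g s i - aogdDelta n g (s-1) i) = aogdDelta n g t i := by
  induction t with
  | zero => simp [aux_delta_zero]
  | succ m ih =>
      rw [Finset.sum_Icc_succ_top (by omega), ih]
      simp

lemma aux_amgm (R a d D1 D2 : ℝ) (hR : 0 < R) (h1 : 0 ≤ D1) (h12 : D1 ≤ D2)
    (ha : a ^ 2 = D2 ^ 2 - D1 ^ 2) :
    a * d ≤ (1/2) * (((D2 + D1) / (2*R)) * d ^ 2) + R * (D2 - D1) := by
  rcases eq_or_lt_of_le (h1.trans h12) with h2 | h2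
  · have hD1 : D1 = 0 := le_antisymm (by rw [← h2] at h12; linarith) h1
    have ha0 : a = 0 := by nlinarith
    rw [ha0, ← h2, hD1]
    simp
  · have hD : 0 < D2 + D1 := by linarith
    have key := sq_nonneg (2*R*a - (D2+D1)*d)
    have haa : a ^ 2 = (D2 - D1) * (D2 + D1) := by rw [ha]; ring
    have goal' : (4*R*(D2+D1)) * (a*d)
        ≤ (4*R*(D2+D1)) * ((1/2) * (((D2 + D1) / (2*R)) * d ^ 2) + R * (D2 - D1)) := by
      have e : (4*R*(D2+D1)) * ((1/2) * (((D2 + D1) / (2*R)) * d ^ 2) + R * (D2 - D1))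
          = (D2+D1)^2 * d^2 + 4*R^2*(D2-D1)*(D2+D1) := by
        field_simp
        ring
      rw [e]
      nlinarith [key, haa]
    exact le_of_mul_le_mul_left goal' (by positivity)


lemma aux_quad_min {n : ℕ} {K : Set (Fin n → ℝ)} (hKv : Convex ℝ K)
    (c : Fin n → ℝ) (S : Finset ℕ) (κ : ℕ → Fin n → ℝ) (hκ : ∀ s ∈ S, ∀ i, 0 ≤ κ s i)
    (p : ℕ → Fin n → ℝ) (w : Fin n → ℝ) (hw : w ∈ K)
    (hmin : IsMinOn (fun z => (∑ i, c i * z i) + ∑ i, ∑ s ∈ S, κ s i * (z i - p s i) ^ 2) K w) :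
    ∀ z ∈ K,
      ((∑ i, c i * w i) + ∑ i, ∑ s ∈ S, κ s i * (w i - p s i) ^ 2)
        + (∑ i, (∑ s ∈ S, κ s i) * (z i - w i) ^ 2)
      ≤ (∑ i, c i * z i) + ∑ i, ∑ s ∈ S, κ s i * (z i - p s i) ^ 2 := by
  intro z hz
  set G : (Fin n → ℝ) → ℝ :=
    fun z => (∑ i, c i * z i) + ∑ i, ∑ s ∈ S, κ s i * (z i - p s i) ^ 2 with hG
  set Q : ℝ := ∑ i, (∑ s ∈ S, κ s i) * (z i - w i) ^ 2 with hQ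
  have hQ0 : 0 ≤ Q :=
    Finset.sum_nonneg fun i _ =>
      mul_nonneg (Finset.sum_nonneg fun s hs => hκ s hs i) (sq_nonneg _)
  have key : ∀ lam : ℝ, 0 < lam → lam ≤ 1 → (1 - lam) * Q ≤ G z - G w := by
    intro lam h0 h1
    have hmem : (fun i => w i + lam * (z i - w i)) ∈ K := by
      have h := hKv hw hz (by linarith : (0:ℝ) ≤ 1 - lam) (le_of_lt h0) (by ring)
      convert h using 1
      funext i
      simp [smul_eq_mul]
      ring
    have hcmp : G w ≤ G (fun i => w i + lam * (z i - w i)) := hmin hmem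
    have hid : G (fun i => w i + lam * (z i - w i))
        = G w + lam * (G z - G w) - lam * (1 - lam) * Q := by
      have hper : ∀ i : Fin n,
          c i * (w i + lam * (z i - w i))
            + ∑ s ∈ S, κ s i * ((w i + lam * (z i - w i)) - p s i) ^ 2
          = (c i * w i + ∑ s ∈ S, κ s i * (w i - p s i) ^ 2)
            + lam * ((c i * z i + ∑ s ∈ S, κ s i * (z i - p s i) ^ 2)
                - (c i * w i + ∑ s ∈ S, κ s i * (w i - p s i) ^ 2))
            - lam * (1 - lam) * ((∑ s ∈ S, κ s i) * (z i - w i) ^ 2) := by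
        intro i
        have h1 : ∑ s ∈ S, κ s i * ((w i + lam * (z i - w i)) - p s i) ^ 2
            = ∑ s ∈ S, (κ s i * (w i - p s i) ^ 2
                + lam * (κ s i * (z i - p s i) ^ 2 - κ s i * (w i - p s i) ^ 2)
                - lam * (1 - lam) * (z i - w i) ^ 2 * κ s i) :=
          Finset.sum_congr rfl fun s _ => by ring
        rw [h1]
        simp only [Finset.sum_add_distrib, Finset.sum_sub_distrib, ← Finset.mul_sum]
        ring
      have h2 : G (fun i => w i + lam * (z i - w i))
          = ∑ i, (c i * (w i + lam * (z i - w i))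
              + ∑ s ∈ S, κ s i * ((w i + lam * (z i - w i)) - p s i) ^ 2) := by
        rw [hG]; simp [Finset.sum_add_distrib]
      rw [h2, Finset.sum_congr rfl fun i _ => hper i]
      simp only [Finset.sum_add_distrib, Finset.sum_sub_distrib, ← Finset.mul_sum, hG, hQ]
      try ring
    have h2 : 0 ≤ lam * ((G z - G w) - (1 - lam) * Q) := by nlinarith [hcmp, hid]
    have h3 := (mul_nonneg_iff_of_pos_left h0).mp h2
    linarith
  have hfin : G w + Q ≤ G z := by
    refine le_of_forall_pos_le_add fun ε hε => ?_
    have hQ1 : (0:ℝ) < Q + 1 := by linarith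
    have hl : 0 < ε / (Q + 1) := div_pos hε hQ1
    set lam := min 1 (ε / (Q + 1)) with hlam
    have h0 : 0 < lam := lt_min one_pos hl
    have h1 : lam ≤ 1 := min_le_left _ _
    have hk := key lam h0 h1
    have h4 : lam * Q ≤ ε := by
      calc lam * Q ≤ (ε / (Q + 1)) * Q :=
            mul_le_mul_of_nonneg_right (min_le_right _ _) hQ0
        _ ≤ ε := by
            rw [div_mul_eq_mul_div, div_le_iff₀ hQ1]; nlinarith
    linarith
  exact hfin

/-- AO-GD regret bound: on `K ⊆ ×ᵢ [-Rᵢ, Rᵢ]`, with martingale gradient prediction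
`g̃_{t+1} = g_t` (`g 0 = 0`) and the adaptive per-coordinate regularizer above, the
AO-FTRL iterates satisfy
`∑_{t=1}^T (f_t(x_t) - f_t(x)) ≤ 4 ∑_i R_i √(∑_{t=1}^T (g_{t,i} - g_{t-1,i})²)`. -/
theorem stmt_9 (n T : ℕ) (K : Set (Fin n → ℝ)) (hKne : K.Nonempty)
    (hKc : IsCompact K) (hKv : Convex ℝ K)
    (R : Fin n → ℝ) (hR : ∀ i, 0 < R i)
    (hKbox : ∀ z ∈ K, ∀ i, |z i| ≤ R i)
    (f : ℕ → (Fin n → ℝ) → ℝ) (g : ℕ → Fin n → ℝ) (x : ℕ → Fin n → ℝ)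
    (hg0 : g 0 = 0)
    (hf : ∀ t, 1 ≤ t → ConvexOn ℝ K (f t))
    (hsub : ∀ t, 1 ≤ t → ∀ z ∈ K,
      f t (x t) + (∑ i, g t i * (z i - x t i)) ≤ f t z)
    (hx1 : x 1 ∈ K)
    (hupd : ∀ t, 1 ≤ t → x (t + 1) ∈ K ∧
      IsMinOn (fun z => (∑ i, ((∑ s ∈ Finset.Icc 1 t, g s i) + g t i) * z i)
        + aogdReg n R g x t z) K (x (t + 1))) :
    ∀ x' ∈ K,
      ∑ t ∈ Finset.Icc 1 T, (f t (x t) - f t x')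
        ≤ 4 * ∑ i, R i * Real.sqrt (∑ t ∈ Finset.Icc 1 T, (g t i - g (t - 1) i) ^ 2) := by
  intro x' hx'
  have hΔnn : ∀ s i, 0 ≤ aogdDelta n g s i := aux_delta_nonneg n g
  have hσnn : ∀ (s : ℕ) (i : Fin n),
      0 ≤ (aogdDelta n g s i - aogdDelta n g (s-1) i) / (2 * R i) := fun s i =>
    div_nonneg (sub_nonneg.2 (aux_delta_mono n g (Nat.sub_le s 1) i)) (by linarith [hR i])
  -- the FTRL objective without optimism
  set F : ℕ → (Fin n → ℝ) → ℝ :=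
    fun t z => (∑ i, (∑ s ∈ Finset.Icc 1 t, g s i) * z i) + aogdReg n R g x t z with hFdef
  have hFcont : ∀ t, Continuous (F t) := by
    intro t
    apply Continuous.add
    · exact continuous_finset_sum _ fun i _ => continuous_const.mul (continuous_apply i)
    · unfold aogdReg
      exact continuous_finset_sum _ fun i _ => continuous_finset_sum _ fun s _ =>
        continuous_const.mul (((continuous_apply i).sub continuous_const).pow 2)
  have hexists : ∀ t : ℕ, ∃ u ∈ K, IsMinOn (F t) K u := fun t =>
    hKc.exists_isMinOn hKne (hFcont t).continuousOn
  choose u huK humin using hexists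
  have hxK : ∀ t, 1 ≤ t → x t ∈ K := by
    intro t ht
    obtain ⟨k, rfl⟩ : ∃ k, t = k + 1 := ⟨t - 1, by omega⟩
    cases k with
    | zero => exact hx1
    | succ m => exact (hupd (m+1) (by omega)).1
  have hxmin : ∀ t : ℕ,
      IsMinOn (fun z => (∑ i, ((∑ s ∈ Finset.Icc 1 t, g s i) + g t i) * z i)
        + aogdReg n R g x t z) K (x (t+1)) := by
    intro t
    rcases Nat.eq_zero_or_pos t with h | h
    · subst h
      have hzero : ∀ z : Fin n → ℝ,
          (∑ i, ((∑ s ∈ Finset.Icc 1 0, g s i) + g 0 i) * z i) + aogdReg n R g x 0 z = 0 := by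
        intro z; simp [aogdReg, hg0]
      exact isMinOn_iff.mpr fun z hz => by rw [hzero, hzero]
    · exact (hupd t h).2
  -- relation between the optimistic objective and F
  have hφF : ∀ (t : ℕ) (z : Fin n → ℝ),
      (∑ i, ((∑ s ∈ Finset.Icc 1 t, g s i) + g t i) * z i) + aogdReg n R g x t z
        = F t z + ∑ i, g t i * z i := by
    intro t z
    simp only [hFdef, add_mul, Finset.sum_add_distrib]
    ring
  -- split of F at the top
  have hFsucc : ∀ (m : ℕ) (z : Fin n → ℝ),
      F (m+1) z = F m z + (∑ i, g (m+1) i * z i)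
        + ∑ i, ((aogdDelta n g (m+1) i - aogdDelta n g m i) / (2 * R i)) * (z i - x (m+1) i) ^ 2 := by
    intro m z
    have hlin : ∀ i : Fin n, ∑ s ∈ Finset.Icc 1 (m+1), g s i
        = (∑ s ∈ Finset.Icc 1 m, g s i) + g (m+1) i := fun i =>
      Finset.sum_Icc_succ_top (by omega) _
    have hreg : ∀ i : Fin n,
        ∑ s ∈ Finset.Icc 1 (m+1),
            ((aogdDelta n g s i - aogdDelta n g (s-1) i) / (2 * R i)) * (z i - x s i) ^ 2
          = (∑ s ∈ Finset.Icc 1 m,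
              ((aogdDelta n g s i - aogdDelta n g (s-1) i) / (2 * R i)) * (z i - x s i) ^ 2)
            + ((aogdDelta n g (m+1) i - aogdDelta n g m i) / (2 * R i)) * (z i - x (m+1) i) ^ 2 := by
      intro i
      rw [Finset.sum_Icc_succ_top (by omega)]
      norm_num
    simp only [hFdef, aogdReg, hlin, hreg, add_mul, Finset.sum_add_distrib]
    ring
  -- nonnegativity of the top regularizer piece
  have hrtnn : ∀ (m : ℕ) (z : Fin n → ℝ),
      0 ≤ ∑ i, ((aogdDelta n g (m+1) i - aogdDelta n g m i) / (2 * R i)) * (z i - x (m+1) i) ^ 2 := by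
    intro m z
    apply Finset.sum_nonneg
    intro i _
    have := hσnn (m+1) i
    simp only [Nat.add_sub_cancel] at this
    exact mul_nonneg this (sq_nonneg _)
  -- the key induction (Claim)
  have claim : ∀ (m : ℕ), ∀ y ∈ K,
      (∑ t ∈ Finset.Icc 1 m,
        ((∑ i, g (t-1) i * x t i) + ∑ i, (g t i - g (t-1) i) * u t i)) ≤ F m y := by
    intro m
    induction m with
    | zero => intro y hy; simp [hFdef, aogdReg]
    | succ m ih =>
      intro y hy
      rw [Finset.sum_Icc_succ_top (by omega)]
      have hxm : x (m+1) ∈ K := hxK (m+1) (by omega)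
      have step1 := ih (x (m+1)) hxm
      have step2 : F m (x (m+1)) + (∑ i, g m i * x (m+1) i)
          ≤ F m (u (m+1)) + (∑ i, g m i * u (m+1) i) := by
        have h : ((∑ i, ((∑ s ∈ Finset.Icc 1 m, g s i) + g m i) * x (m+1) i)
              + aogdReg n R g x m (x (m+1)))
            ≤ ((∑ i, ((∑ s ∈ Finset.Icc 1 m, g s i) + g m i) * u (m+1) i)
              + aogdReg n R g x m (u (m+1))) := hxmin m (huK (m+1))
        rw [hφF, hφF] at h
        exact h
      have step3 : (∑ i, g m i * u (m+1) i) + (∑ i, (g (m+1) i - g m i) * u (m+1) i)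
          = ∑ i, g (m+1) i * u (m+1) i := by
        rw [← Finset.sum_add_distrib]
        exact Finset.sum_congr rfl fun i _ => by ring
      have step4 : F m (u (m+1)) + (∑ i, g (m+1) i * u (m+1) i) ≤ F (m+1) (u (m+1)) := by
        rw [hFsucc m (u (m+1))]
        linarith [hrtnn m (u (m+1))]
      have step5 : F (m+1) (u (m+1)) ≤ F (m+1) y := humin (m+1) hy
      have hsimp : (m + 1 : ℕ) - 1 = m := by omega
      rw [hsimp]
      linarith
  -- sum of the regularizer coefficients
  have hsumk : ∀ (t : ℕ) (i : Fin n),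
      ∑ s ∈ Finset.Icc 1 t, (aogdDelta n g s i - aogdDelta n g (s-1) i) / (2 * R i)
        = aogdDelta n g t i / (2 * R i) := by
    intro t i
    rw [← Finset.sum_div, aux_teles]
  -- stability bound
  have hstab : ∀ (m : ℕ),
      (∑ i, (g (m+1) i - g m i) * (x (m+1) i - u (m+1) i))
        ≤ ∑ i, 2 * R i * (aogdDelta n g (m+1) i - aogdDelta n g m i) := by
    intro m
    -- strong convexity at the two minimizers
    have h1 := aux_quad_min hKv (fun i => ∑ s ∈ Finset.Icc 1 (m+1), g s i) (Finset.Icc 1 (m+1))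
      (fun s i => (aogdDelta n g s i - aogdDelta n g (s-1) i) / (2 * R i))
      (fun s _ i => hσnn s i) x (u (m+1)) (huK (m+1)) (humin (m+1)) (x (m+1)) (hxK (m+1) (by omega))
    have h2 := aux_quad_min hKv (fun i => (∑ s ∈ Finset.Icc 1 m, g s i) + g m i) (Finset.Icc 1 m)
      (fun s i => (aogdDelta n g s i - aogdDelta n g (s-1) i) / (2 * R i))
      (fun s _ i => hσnn s i) x (x (m+1)) (hxK (m+1) (by omega)) (hxmin m) (u (m+1)) (huK (m+1))
    -- rewrite the curvature sums
    have hq1 : ∀ z w : Fin n → ℝ,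
        (∑ i, (∑ s ∈ Finset.Icc 1 (m+1), (aogdDelta n g s i - aogdDelta n g (s-1) i) / (2 * R i))
          * (z i - w i) ^ 2)
        = ∑ i, (aogdDelta n g (m+1) i / (2 * R i)) * (z i - w i) ^ 2 := fun z w =>
      Finset.sum_congr rfl fun i _ => by rw [hsumk]
    have hq2 : ∀ z w : Fin n → ℝ,
        (∑ i, (∑ s ∈ Finset.Icc 1 m, (aogdDelta n g s i - aogdDelta n g (s-1) i) / (2 * R i))
          * (z i - w i) ^ 2)
        = ∑ i, (aogdDelta n g m i / (2 * R i)) * (z i - w i) ^ 2 := fun z w =>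
      Finset.sum_congr rfl fun i _ => by rw [hsumk]
    rw [hq1] at h1
    rw [hq2] at h2
    -- interpret h1 and h2 in terms of F and the optimistic objective
    have h1' : F (m+1) (u (m+1)) + (∑ i, (aogdDelta n g (m+1) i / (2 * R i))
          * (x (m+1) i - u (m+1) i) ^ 2) ≤ F (m+1) (x (m+1)) := h1
    have h2' : (F m (x (m+1)) + ∑ i, g m i * x (m+1) i)
          + (∑ i, (aogdDelta n g m i / (2 * R i)) * (u (m+1) i - x (m+1) i) ^ 2)
        ≤ F m (u (m+1)) + ∑ i, g m i * u (m+1) i := by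
      rw [← hφF, ← hφF]
      exact h2
    -- expand F (m+1) via hFsucc
    rw [hFsucc m (u (m+1)), hFsucc m (x (m+1))] at h1'
    -- the proximal term vanishes at x (m+1)
    have hzero : (∑ i, ((aogdDelta n g (m+1) i - aogdDelta n g m i) / (2 * R i))
        * (x (m+1) i - x (m+1) i) ^ 2) = 0 := by
      apply Finset.sum_eq_zero; intro i _; simp
    rw [hzero, add_zero] at h1'
    have hrt := hrtnn m (u (m+1))
    -- linear decompositions
    have hg1 : (∑ i, g (m+1) i * x (m+1) i)
        = (∑ i, g m i * x (m+1) i) + ∑ i, (g (m+1) i - g m i) * x (m+1) i := by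
      rw [← Finset.sum_add_distrib]; exact Finset.sum_congr rfl fun i _ => by ring
    have hg2 : (∑ i, g (m+1) i * u (m+1) i)
        = (∑ i, g m i * u (m+1) i) + ∑ i, (g (m+1) i - g m i) * u (m+1) i := by
      rw [← Finset.sum_add_distrib]; exact Finset.sum_congr rfl fun i _ => by ring
    rw [hg1, hg2] at h1'
    -- S := the quantity to bound
    have hSdecomp : (∑ i, (g (m+1) i - g m i) * (x (m+1) i - u (m+1) i))
        = (∑ i, (g (m+1) i - g m i) * x (m+1) i) - ∑ i, (g (m+1) i - g m i) * u (m+1) i := by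
      rw [← Finset.sum_sub_distrib]; exact Finset.sum_congr rfl fun i _ => by ring
    -- combine curvature sums
    have hQQ : (∑ i, (aogdDelta n g (m+1) i / (2 * R i)) * (x (m+1) i - u (m+1) i) ^ 2)
          + (∑ i, (aogdDelta n g m i / (2 * R i)) * (u (m+1) i - x (m+1) i) ^ 2)
        = ∑ i, ((aogdDelta n g (m+1) i + aogdDelta n g m i) / (2 * R i))
            * (x (m+1) i - u (m+1) i) ^ 2 := by
      rw [← Finset.sum_add_distrib]
      refine Finset.sum_congr rfl fun i _ => by ring
    -- from h1' + h2' : S ≥ curvature sum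
    have hlow : (∑ i, ((aogdDelta n g (m+1) i + aogdDelta n g m i) / (2 * R i))
          * (x (m+1) i - u (m+1) i) ^ 2)
        ≤ ∑ i, (g (m+1) i - g m i) * (x (m+1) i - u (m+1) i) := by
      rw [hSdecomp, ← hQQ]
      linarith
    -- per-coordinate AM-GM
    have hup : (∑ i, (g (m+1) i - g m i) * (x (m+1) i - u (m+1) i))
        ≤ (∑ i, (1/2) * (((aogdDelta n g (m+1) i + aogdDelta n g m i) / (2 * R i))
              * (x (m+1) i - u (m+1) i) ^ 2))
          + ∑ i, R i * (aogdDelta n g (m+1) i - aogdDelta n g m i) := by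
      rw [← Finset.sum_add_distrib]
      refine Finset.sum_le_sum fun i _ => ?_
      exact aux_amgm (R i) (g (m+1) i - g m i) (x (m+1) i - u (m+1) i)
        (aogdDelta n g m i) (aogdDelta n g (m+1) i) (hR i) (hΔnn m i)
        (aux_delta_mono n g (by omega) i) (by rw [aux_delta_sq]; ring)
    have hhalf : (∑ i, (1/2) * (((aogdDelta n g (m+1) i + aogdDelta n g m i) / (2 * R i))
          * (x (m+1) i - u (m+1) i) ^ 2))
        = (1/2) * ∑ i, ((aogdDelta n g (m+1) i + aogdDelta n g m i) / (2 * R i))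
            * (x (m+1) i - u (m+1) i) ^ 2 := by
      rw [Finset.mul_sum]
    have hfin : (∑ i, 2 * R i * (aogdDelta n g (m+1) i - aogdDelta n g m i))
        = 2 * ∑ i, R i * (aogdDelta n g (m+1) i - aogdDelta n g m i) := by
      rw [Finset.mul_sum]; exact Finset.sum_congr rfl fun i _ => by ring
    rw [hfin]
    rw [hhalf] at hup
    linarith
  -- bound on the regularizer at the comparator
  have hregbound : aogdReg n R g x T x' ≤ ∑ i, 2 * R i * aogdDelta n g T i := by
    unfold aogdReg
    refine Finset.sum_le_sum fun i _ => ?_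
    have hbox : ∀ s ∈ Finset.Icc 1 T, (x' i - x s i) ^ 2 ≤ (2 * R i) ^ 2 := by
      intro s hs
      have hs1 : 1 ≤ s := (Finset.mem_Icc.mp hs).1
      have h1 := hKbox x' hx' i
      have h2 := hKbox (x s) (hxK s hs1) i
      have habs : |x' i - x s i| ≤ 2 * R i := by
        calc |x' i - x s i| ≤ |x' i| + |x s i| := abs_sub _ _
          _ ≤ 2 * R i := by linarith
      have := abs_le.mp habs
      nlinarith
    calc ∑ s ∈ Finset.Icc 1 T,
          ((aogdDelta n g s i - aogdDelta n g (s-1) i) / (2 * R i)) * (x' i - x s i) ^ 2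
        ≤ ∑ s ∈ Finset.Icc 1 T,
          ((aogdDelta n g s i - aogdDelta n g (s-1) i) / (2 * R i)) * (2 * R i) ^ 2 :=
          Finset.sum_le_sum fun s hs =>
            mul_le_mul_of_nonneg_left (hbox s hs) (hσnn s i)
      _ = (∑ s ∈ Finset.Icc 1 T, (aogdDelta n g s i - aogdDelta n g (s-1) i) / (2 * R i))
            * (2 * R i) ^ 2 := by rw [Finset.sum_mul]
      _ = (aogdDelta n g T i / (2 * R i)) * (2 * R i) ^ 2 := by rw [hsumk]
      _ = 2 * R i * aogdDelta n g T i := by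
          have : R i ≠ 0 := ne_of_gt (hR i)
          field_simp
  -- linearized regret
  have hlin : ∑ t ∈ Finset.Icc 1 T, (f t (x t) - f t x')
      ≤ ∑ t ∈ Finset.Icc 1 T, ∑ i, g t i * (x t i - x' i) := by
    refine Finset.sum_le_sum fun t ht => ?_
    have ht1 : 1 ≤ t := (Finset.mem_Icc.mp ht).1
    have h := hsub t ht1 x' hx'
    have hns : (∑ i, g t i * (x' i - x t i)) = - ∑ i, g t i * (x t i - x' i) := by
      rw [← Finset.sum_neg_distrib]; exact Finset.sum_congr rfl fun i _ => by ring
    rw [hns] at h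
    linarith
  -- decompose the linearized regret
  have hdecomp : ∀ t : ℕ, 1 ≤ t →
      (∑ i, g t i * (x t i - x' i))
        = ((∑ i, g (t-1) i * x t i) + ∑ i, (g t i - g (t-1) i) * u t i)
          + (∑ i, (g t i - g (t-1) i) * (x t i - u t i))
          - ∑ i, g t i * x' i := by
    intro t ht
    rw [← Finset.sum_add_distrib, ← Finset.sum_add_distrib, ← Finset.sum_sub_distrib]
    exact Finset.sum_congr rfl fun i _ => by ring
  have hsum1 : ∑ t ∈ Finset.Icc 1 T, ∑ i, g t i * (x t i - x' i)
      = (∑ t ∈ Finset.Icc 1 T,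
          ((∑ i, g (t-1) i * x t i) + ∑ i, (g t i - g (t-1) i) * u t i))
        + (∑ t ∈ Finset.Icc 1 T, ∑ i, (g t i - g (t-1) i) * (x t i - u t i))
        - ∑ t ∈ Finset.Icc 1 T, ∑ i, g t i * x' i := by
    rw [← Finset.sum_add_distrib, ← Finset.sum_sub_distrib]
    refine Finset.sum_congr rfl fun t ht => hdecomp t (Finset.mem_Icc.mp ht).1
  have hsum2 : (∑ t ∈ Finset.Icc 1 T, ∑ i, g t i * x' i)
      = ∑ i, (∑ s ∈ Finset.Icc 1 T, g s i) * x' i := by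
    rw [Finset.sum_comm]
    exact Finset.sum_congr rfl fun i _ => by rw [Finset.sum_mul]
  -- stability sum telescopes
  have hstabsum : (∑ t ∈ Finset.Icc 1 T, ∑ i, (g t i - g (t-1) i) * (x t i - u t i))
      ≤ ∑ i, 2 * R i * aogdDelta n g T i := by
    have hb : ∀ t ∈ Finset.Icc 1 T, (∑ i, (g t i - g (t-1) i) * (x t i - u t i))
        ≤ ∑ i, 2 * R i * (aogdDelta n g t i - aogdDelta n g (t-1) i) := by
      intro t ht
      have ht1 : 1 ≤ t := (Finset.mem_Icc.mp ht).1
      obtain ⟨m, rfl⟩ : ∃ m, t = m + 1 := ⟨t - 1, by omega⟩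
      have := hstab m
      simpa using this
    calc (∑ t ∈ Finset.Icc 1 T, ∑ i, (g t i - g (t-1) i) * (x t i - u t i))
        ≤ ∑ t ∈ Finset.Icc 1 T, ∑ i, 2 * R i * (aogdDelta n g t i - aogdDelta n g (t-1) i) :=
          Finset.sum_le_sum hb
      _ = ∑ i, ∑ t ∈ Finset.Icc 1 T, 2 * R i * (aogdDelta n g t i - aogdDelta n g (t-1) i) :=
          Finset.sum_comm
      _ = ∑ i, 2 * R i * aogdDelta n g T i := by
          refine Finset.sum_congr rfl fun i _ => ?_
          rw [← Finset.mul_sum, aux_teles]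
  -- assemble
  have hclaim := claim T x' hx'
  have hFx' : F T x' = (∑ i, (∑ s ∈ Finset.Icc 1 T, g s i) * x' i) + aogdReg n R g x T x' := rfl
  have hrhs : (∑ i, R i * Real.sqrt (∑ t ∈ Finset.Icc 1 T, (g t i - g (t - 1) i) ^ 2))
      = ∑ i, R i * aogdDelta n g T i := rfl
  rw [hrhs]
  have h2RΔ : (∑ i, 2 * R i * aogdDelta n g T i) = 2 * ∑ i, R i * aogdDelta n g T i := by
    rw [Finset.mul_sum]; exact Finset.sum_congr rfl fun i _ => by ring
  calc ∑ t ∈ Finset.Icc 1 T, (f t (x t) - f t x')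
      ≤ ∑ t ∈ Finset.Icc 1 T, ∑ i, g t i * (x t i - x' i) := hlin
    _ = (∑ t ∈ Finset.Icc 1 T,
          ((∑ i, g (t-1) i * x t i) + ∑ i, (g t i - g (t-1) i) * u t i))
        + (∑ t ∈ Finset.Icc 1 T, ∑ i, (g t i - g (t-1) i) * (x t i - u t i))
        - ∑ i, (∑ s ∈ Finset.Icc 1 T, g s i) * x' i := by rw [hsum1, hsum2]
    _ ≤ F T x' + (∑ i, 2 * R i * aogdDelta n g T i)
        - ∑ i, (∑ s ∈ Finset.Icc 1 T, g s i) * x' i := by linarith [hclaim, hstabsum]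
    _ = aogdReg n R g x T x' + ∑ i, 2 * R i * aogdDelta n g T i := by rw [hFx']; ring
    _ ≤ (∑ i, 2 * R i * aogdDelta n g T i) + ∑ i, 2 * R i * aogdDelta n g T i := by
        linarith [hregbound]
    _ ≤ 4 * ∑ i, R i * aogdDelta n g T i := by rw [h2RΔ]; linarith
end
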